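/- Fix thresholds 0 < t_k < t_ν. Define the two-sided Gaussian exceedance probability p_t(μ) = Φ̄(t - μ) + Φ(-t - μ) for μ ≥ 0, where Φ is the standard normal CDF and Φ̄ = 1 - Φ. Then μ ↦ p_t(μ) is strictly increasing on (0,∞), and the bi-threshold function g(π) = p_{t_ν}(p_{t_k}^{-1}(π)) is convex and increasing in π on the range of p_{t_k} restricted to [0,∞). -/

import Mathlib

open MeasureTheory Set

/-- Standard Gaussian density. -/
noncomputable def gphi (v : ℝ) : ℝ := (Real.sqrt (2 * Real.pi))⁻¹ * Real.exp (-v ^ 2 / 2)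

/-- Standard Gaussian upper tail probability. -/
noncomputable def PhiBar (v : ℝ) : ℝ := ∫ x in Set.Ioi v, gphi x

/-- Standard Gaussian CDF. -/
noncomputable def Phi (v : ℝ) : ℝ := ∫ x in Set.Iic v, gphi x

/-- Two-sided Gaussian exceedance probability at threshold `t` and mean `μ`. -/
noncomputable def pexc (t μ : ℝ) : ℝ := PhiBar (t - μ) + Phi (-t - μ)

/-! Writing `p_t' = 2 φ(t) e^{-μ²/2} sinh(tμ)`, the function `g = p_{t_ν} ∘ p_{t_k}⁻¹` has,
by Cauchy's mean value theorem, chord slopes of the form `p_{t_ν}'(ξ) / p_{t_k}'(ξ)`, which is a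
positive constant times `sinh(t_ν ξ) / sinh(t_k ξ)`. That ratio increases in `ξ` because `sinh` is
convex on `[0, ∞)`, so the chord slopes of `g` increase and `g` is convex. -/

lemma StrictMonoOn.strictMonoOn_invFunOn_image {α β : Type*} [LinearOrder α] [Preorder β]
    [Nonempty α] {f : α → β} {s : Set α} (hf : StrictMonoOn f s) :
    StrictMonoOn (Function.invFunOn f s) (f '' s) := by
  rintro _ ⟨a, ha, rfl⟩ _ ⟨b, hb, rfl⟩ hab
  rw [hf.injOn.leftInvOn_invFunOn ha, hf.injOn.leftInvOn_invFunOn hb]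
  exact (hf.lt_iff_lt ha hb).1 hab

lemma convexOn_comp_invFunOn_image {s : Set ℝ} (hs : Convex ℝ s) {f g f' g' : ℝ → ℝ}
    (hfc : ContinuousOn f s) (hgc : ContinuousOn g s)
    (hf : ∀ x ∈ interior s, HasDerivAt f (f' x) x) (hg : ∀ x ∈ interior s, HasDerivAt g (g' x) x)
    (hf'_pos : ∀ x ∈ interior s, 0 < f' x)
    (hmono : MonotoneOn (fun x => g' x / f' x) (interior s)) :
    ConvexOn ℝ (f '' s) (fun y => g (Function.invFunOn f s y)) := by
  have hf_strict : StrictMonoOn f s := strictMonoOn_of_deriv_pos hs hfc fun x hx => by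
    rw [(hf x hx).deriv]; exact hf'_pos x hx
  have chord : ∀ a ∈ s, ∀ b ∈ s, a < b →
      ∃ ξ ∈ Ioo a b, ξ ∈ interior s ∧ (g b - g a) / (f b - f a) = g' ξ / f' ξ := by
    intro a ha b hb hab
    have hIcc : Icc a b ⊆ s := hs.ordConnected.out ha hb
    have hIoo : Ioo a b ⊆ interior s :=
      interior_maximal (Ioo_subset_Icc_self.trans hIcc) isOpen_Ioo
    obtain ⟨ξ, hξ, h⟩ := exists_ratio_hasDerivAt_eq_ratio_slope f f' hab (hfc.mono hIcc)
      (fun x hx => hf x (hIoo hx)) g g' (hgc.mono hIcc) (fun x hx => hg x (hIoo hx))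
    refine ⟨ξ, hξ, hIoo hξ, ?_⟩
    rw [div_eq_div_iff (sub_pos.2 (hf_strict ha hb hab)).ne' (hf'_pos ξ (hIoo hξ)).ne']
    linarith
  have hconv : Convex ℝ (f '' s) := (hs.isPreconnected.image f hfc).ordConnected.convex
  refine convexOn_of_slope_mono_adjacent hconv ?_
  rintro _ y _ ⟨a, ha, rfl⟩ ⟨c, hc, rfl⟩ hay hyc
  obtain ⟨b, hb, rfl⟩ := hconv.ordConnected.out ⟨a, ha, rfl⟩ ⟨c, hc, rfl⟩ ⟨hay.le, hyc.le⟩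
  simp only [hf_strict.injOn.leftInvOn_invFunOn ha, hf_strict.injOn.leftInvOn_invFunOn hb,
    hf_strict.injOn.leftInvOn_invFunOn hc]
  obtain ⟨ξ₁, hξ₁, hξ₁s, h₁⟩ := chord a ha b hb ((hf_strict.lt_iff_lt ha hb).1 hay)
  obtain ⟨ξ₂, hξ₂, hξ₂s, h₂⟩ := chord b hb c hc ((hf_strict.lt_iff_lt hb hc).1 hyc)
  rw [h₁, h₂]
  exact hmono hξ₁s hξ₂s (hξ₁.2.trans hξ₂.1).le

-- `Real` is opened only here: its notation `π` would capture the binder `π` in `stmt6`.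
section

open Real

lemma convexOn_sinh : ConvexOn ℝ (Ici 0) sinh := by
  refine MonotoneOn.convexOn_of_deriv (convex_Ici 0) continuous_sinh.continuousOn
    differentiable_sinh.differentiableOn ?_
  rw [Real.deriv_sinh, interior_Ici]
  intro x hx y hy hxy
  rw [cosh_le_cosh, abs_of_pos hx, abs_of_pos hy]
  exact hxy

lemma mul_sinh_le_mul_sinh {u v : ℝ} (hv : 0 ≤ v) (hvu : v ≤ u) :
    u * sinh v ≤ v * sinh u := by
  rcases hv.eq_or_lt with rfl | hv
  · simp
  have hu := hv.trans_le hvu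
  have := convexOn_sinh.secant_mono self_mem_Ici hv.le hu.le hv.ne' hu.ne' hvu
  simp only [sinh_zero, sub_zero] at this
  rw [div_le_div_iff₀ hv hu] at this
  linarith

lemma monotoneOn_sinh_mul_div_sinh_mul {a b : ℝ} (hb : 0 < b) (hba : b ≤ a) :
    MonotoneOn (fun x => sinh (a * x) / sinh (b * x)) (Ioi 0) := by
  have hsinh_pos : ∀ x ∈ Ioi (0 : ℝ), 0 < sinh (b * x) := fun x hx =>
    sinh_pos_iff.2 (mul_pos hb hx)
  have hderiv : ∀ x ∈ Ioi (0 : ℝ), HasDerivAt (fun x => sinh (a * x) / sinh (b * x))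
      ((cosh (a * x) * a * sinh (b * x) - sinh (a * x) * (cosh (b * x) * b))
        / sinh (b * x) ^ 2) x := fun x hx => by
    have hax := ((hasDerivAt_id' x).const_mul a).sinh
    have hbx := ((hasDerivAt_id' x).const_mul b).sinh
    simp only [mul_one] at hax hbx
    exact hax.div hbx (hsinh_pos x hx).ne'
  refine monotoneOn_of_deriv_nonneg (convex_Ioi 0)
    (fun x hx => (hderiv x hx).continuousAt.continuousWithinAt)
    (fun x hx => (hderiv x (interior_subset hx)).differentiableAt.differentiableWithinAt) ?_
  rw [interior_Ioi]
  intro x hx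
  rw [(hderiv x hx).deriv]
  refine div_nonneg ?_ (sq_nonneg _)
  have hx : 0 < x := hx
  -- product-to-sum: the numerator is `((a - b) sinh((a+b)x) - (a + b) sinh((a-b)x)) / 2`
  have key := mul_sinh_le_mul_sinh (u := (a + b) * x) (v := (a - b) * x)
    (by nlinarith) (by nlinarith)
  rw [add_mul, sub_mul, sinh_add, sinh_sub] at key
  refine nonneg_of_mul_nonneg_right ?_ (mul_pos two_pos hx)
  linarith

lemma continuous_gphi : Continuous gphi := by
  unfold gphi; fun_prop

lemma gphi_pos (v : ℝ) : 0 < gphi v := by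
  unfold gphi; positivity

lemma gphi_neg (v : ℝ) : gphi (-v) = gphi v := by
  simp only [gphi, neg_sq]

lemma integrable_gphi : Integrable gphi := by
  refine ((integrable_exp_neg_mul_sq (b := 2⁻¹) (by norm_num)).const_mul
    (√(2 * π))⁻¹).congr (ae_of_all _ fun x => ?_)
  simp only [gphi]
  ring_nf

lemma hasDerivAt_Phi (v : ℝ) : HasDerivAt Phi (gphi v) v := by
  have h : Phi = fun w => Phi 0 + ∫ x in (0 : ℝ)..w, gphi x := by
    funext w
    rw [← intervalIntegral.integral_Iic_sub_Iic integrable_gphi.integrableOn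
      integrable_gphi.integrableOn]
    simp only [Phi, add_sub_cancel]
  rw [h]
  exact (intervalIntegral.integral_hasDerivAt_right integrable_gphi.intervalIntegrable
    (continuous_gphi.stronglyMeasurableAtFilter _ _) continuous_gphi.continuousAt).const_add _

lemma hasDerivAt_PhiBar (v : ℝ) : HasDerivAt PhiBar (-gphi v) v := by
  have h : PhiBar = fun w => (∫ x, gphi x) - Phi w := by
    funext w
    rw [← intervalIntegral.integral_Iic_add_Ioi integrable_gphi.integrableOn
      integrable_gphi.integrableOn (b := w)]
    simp only [PhiBar, Phi, add_sub_cancel_left]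
  rw [h]
  simpa using (hasDerivAt_Phi v).const_sub (∫ x, gphi x)

noncomputable def pexcDeriv (t μ : ℝ) : ℝ := 2 * gphi t * exp (-μ ^ 2 / 2) * sinh (t * μ)

lemma gphi_sub_sub_gphi_add (t μ : ℝ) : gphi (t - μ) - gphi (t + μ) = pexcDeriv t μ := by
  simp only [gphi, pexcDeriv, sinh_eq]
  rw [show -(t - μ) ^ 2 / 2 = -t ^ 2 / 2 + -μ ^ 2 / 2 + t * μ by ring,
    show -(t + μ) ^ 2 / 2 = -t ^ 2 / 2 + -μ ^ 2 / 2 + -(t * μ) by ring]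
  simp only [exp_add]
  ring

lemma hasDerivAt_pexc (t μ : ℝ) : HasDerivAt (pexc t) (pexcDeriv t μ) μ := by
  have hupper := (hasDerivAt_PhiBar (t - μ)).comp μ ((hasDerivAt_id' μ).const_sub t)
  have hlower := (hasDerivAt_Phi (-t - μ)).comp μ ((hasDerivAt_id' μ).const_sub (-t))
  rw [← gphi_sub_sub_gphi_add, show t + μ = -(-t - μ) by ring, gphi_neg]
  exact (hupper.add hlower).congr_deriv (by ring)

lemma pexcDeriv_pos {t μ : ℝ} (ht : 0 < t) (hμ : 0 < μ) : 0 < pexcDeriv t μ := by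
  have := gphi_pos t
  have := sinh_pos_iff.2 (mul_pos ht hμ)
  unfold pexcDeriv
  positivity

lemma strictMonoOn_pexc {t : ℝ} (ht : 0 < t) : StrictMonoOn (pexc t) (Ici 0) := by
  refine strictMonoOn_of_deriv_pos (convex_Ici 0)
    (fun μ _ => (hasDerivAt_pexc t μ).continuousAt.continuousWithinAt) fun μ hμ => ?_
  rw [interior_Ici] at hμ
  rw [(hasDerivAt_pexc t μ).deriv]
  exact pexcDeriv_pos ht hμ

lemma monotoneOn_pexcDeriv_div {tk tν : ℝ} (htk : 0 < tk) (hle : tk ≤ tν) :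
    MonotoneOn (fun μ => pexcDeriv tν μ / pexcDeriv tk μ) (Ioi 0) := by
  have hratio : ∀ μ, pexcDeriv tν μ / pexcDeriv tk μ
      = gphi tν / gphi tk * (sinh (tν * μ) / sinh (tk * μ)) := fun μ => by
    have := (gphi_pos tk).ne'
    have := (exp_pos (-μ ^ 2 / 2)).ne'
    simp only [pexcDeriv]
    field_simp
  simp only [hratio]
  exact fun x hx y hy hxy => mul_le_mul_of_nonneg_left
    (monotoneOn_sinh_mul_div_sinh_mul htk hle hx hy hxy) (div_pos (gphi_pos tν) (gphi_pos tk)).le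

end

theorem stmt6 (tk tν : ℝ) (htk : 0 < tk) (hlt : tk < tν) :
    StrictMonoOn (pexc tk) (Set.Ioi 0) ∧
    StrictMonoOn (pexc tν) (Set.Ioi 0) ∧
    (ConvexOn ℝ (pexc tk '' Set.Ici 0)
        (fun π => pexc tν (Function.invFunOn (pexc tk) (Set.Ici 0) π)) ∧
      MonotoneOn (fun π => pexc tν (Function.invFunOn (pexc tk) (Set.Ici 0) π))
        (pexc tk '' Set.Ici 0)) := by
  have hk := strictMonoOn_pexc htk
  have hν := strictMonoOn_pexc (htk.trans hlt)
  refine ⟨hk.mono Ioi_subset_Ici_self, hν.mono Ioi_subset_Ici_self, ?_,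
    hν.monotoneOn.comp hk.strictMonoOn_invFunOn_image.monotoneOn
      (surjOn_image _ _).mapsTo_invFunOn⟩
  have hcont : ∀ t, ContinuousOn (pexc t) (Ici 0) := fun t μ _ =>
    (hasDerivAt_pexc t μ).continuousAt.continuousWithinAt
  refine convexOn_comp_invFunOn_image (convex_Ici 0) (hcont tk) (hcont tν)
    (fun μ _ => hasDerivAt_pexc tk μ) (fun μ _ => hasDerivAt_pexc tν μ) ?_ ?_ <;>
    rw [interior_Ici]
  · exact fun μ hμ => pexcDeriv_pos htk hμ
  · exact monotoneOn_pexcDeriv_div htk hlt.le
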